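/- Let A_1, …, A_k be weakly acyclic automata over a common alphabet Σ, each equipped with an initial state and a set of accepting states, where A_i has n_i states. If there exists a word accepted by all of A_1, …, A_k, then there exists such a word of length at most (n_1 − 1) + (n_2 − 1) + ⋯ + (n_k − 1). -/

import Mathlib

/-!
In a weakly acyclic automaton a state, once left, is never reached again: a shortest walk
returning to it would be a simple cycle of length at least two. Hence the number of states
reachable from the current state drops at every transition that is not a self-loop. Run all
automata in parallel on an accepted word and delete every letter that fixes all current
states. Each remaining letter lowers the sum over the automata of the number of states
reachable from the current one, less one, and that sum starts at most `∑ i, (n_i - 1)`.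
-/

/-- The extension of the transition function to words. -/
def deltaStar {Q A : Type*} (δ : Q → A → Q) (q : Q) (w : List A) : Q := w.foldl δ q

/-- A simple cycle: pairwise distinct states `q 0, …, q (k-1)` together with letters
mapping each state of the cycle to the next one (cyclically). -/
def IsSimpleCycle {Q A : Type*} (δ : Q → A → Q) (k : ℕ) (q : Fin k → Q) : Prop :=
  0 < k ∧ Function.Injective q ∧
    ∃ x : Fin k → A, ∀ i : Fin k, δ (q i) (x i) = q ⟨(i.val + 1) % k, Nat.mod_lt _ i.pos⟩

/-- An automaton is weakly acyclic if all its simple cycles are self-loops. -/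
def WeaklyAcyclic {Q A : Type*} (δ : Q → A → Q) : Prop :=
  ∀ (k : ℕ) (q : Fin k → Q), IsSimpleCycle δ k q → k = 1

/-- A sink state is fixed by every letter. -/
def IsSink {Q A : Type*} (δ : Q → A → Q) (q : Q) : Prop := ∀ x : A, δ q x = q

/-- The word `w` synchronizes the set `S` of states. -/
def SyncsSet {Q A : Type*} (δ : Q → A → Q) (S : Finset Q) (w : List A) : Prop :=
  ∃ q : Q, ∀ s ∈ S, deltaStar δ s w = q

/-- A set of states is synchronizing if some word synchronizes it. -/
def IsSyncSet {Q A : Type*} (δ : Q → A → Q) (S : Finset Q) : Prop :=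
  ∃ w : List A, SyncsSet δ S w

/-- The rank of a word with respect to an automaton: the size of the image of the
state set under the word. -/
def wordRank {Q A : Type*} [Fintype Q] [DecidableEq Q] (δ : Q → A → Q) (w : List A) : ℕ :=
  (Finset.univ.image fun q => deltaStar δ q w).card

/-- The rank of an automaton: the minimum rank of a word with respect to it. -/
noncomputable def autRank {Q A : Type*} [Fintype Q] [DecidableEq Q] (δ : Q → A → Q) : ℕ :=
  sInf {r | ∃ w : List A, wordRank δ w = r}

/-- The rank of a word with respect to a subset of states. -/
def subsetWordRank {Q A : Type*} [DecidableEq Q] (δ : Q → A → Q) (S : Finset Q)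
    (w : List A) : ℕ :=
  (S.image fun q => deltaStar δ q w).card

/-- The rank of a subset of states: the minimum rank of a word with respect to it. -/
noncomputable def subsetRank {Q A : Type*} [DecidableEq Q] (δ : Q → A → Q) (S : Finset Q) : ℕ :=
  sInf {r | ∃ w : List A, subsetWordRank δ S w = r}

/-- `w^j`: the word obtained by `j` concatenations of `w`. -/
def wordPow {A : Type*} (w : List A) (j : ℕ) : List A := (List.replicate j w).flatten

section Automaton

variable {Q A : Type*} (δ : Q → A → Q)

lemma deltaStar_cons (q : Q) (a : A) (w : List A) :
    deltaStar δ q (a :: w) = deltaStar δ (δ q a) w :=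
  rfl

lemma deltaStar_append (q : Q) (u v : List A) :
    deltaStar δ q (u ++ v) = deltaStar δ (deltaStar δ q u) v :=
  List.foldl_append

lemma deltaStar_take_add_one (q : Q) (w : List A) {j : ℕ} (hj : j < w.length) :
    deltaStar δ q (w.take (j + 1)) = δ (deltaStar δ q (w.take j)) w[j] := by
  rw [List.take_add_one, List.getElem?_eq_getElem hj, deltaStar_append]
  rfl

lemma isSimpleCycle_of_deltaStar_eq_self {p : Q} {w : List A} (hpos : 0 < w.length)
    (hclosed : deltaStar δ p w = p)
    (hinj : Function.Injective fun i : Fin w.length => deltaStar δ p (w.take i)) :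
    IsSimpleCycle δ w.length fun i => deltaStar δ p (w.take i) := by
  refine ⟨hpos, hinj, fun i => w[i.1], fun ⟨i, hi⟩ => ?_⟩
  dsimp only
  rw [← deltaStar_take_add_one δ p w hi]
  rcases (show i + 1 ≤ w.length from hi).lt_or_eq with hlt | heq
  · rw [Nat.mod_eq_of_lt hlt]
  · rw [heq, Nat.mod_self, List.take_length, hclosed]
    rfl

/-- A shortest closed walk through `p` leaving `p` by its first letter would be a simple cycle
of length at least two: a repeated state either closes a shorter such walk at `p`, or can be
cut out of the walk. -/
theorem WeaklyAcyclic.deltaStar_cons_ne_self (hwa : WeaklyAcyclic δ) {p : Q} {a : A}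
    (ha : δ p a ≠ p) (u : List A) : deltaStar δ p (a :: u) ≠ p := by
  induction hn : u.length using Nat.strong_induction_on generalizing u with
  | _ n ih =>
    intro hclosed
    set w := a :: u
    set c : Fin w.length → Q := fun i => deltaStar δ p (w.take i)
    by_cases hinj : Function.Injective c
    · have hlen : w.length = 1 :=
        hwa _ _ <| isSimpleCycle_of_deltaStar_eq_self δ
          (List.length_pos_of_ne_nil (List.cons_ne_nil a u)) hclosed hinj
      obtain rfl : u = [] := by simpa [w] using hlen
      exact ha hclosed
    obtain ⟨⟨i, _⟩, ⟨j, hj⟩, hcij, hij⟩ :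
        ∃ i j : Fin w.length, c i = c j ∧ i < j := by
      obtain ⟨i, j, hcij, hne⟩ := Function.not_injective_iff.mp hinj
      rcases hne.lt_or_gt with h | h
      · exact ⟨i, j, hcij, h⟩
      · exact ⟨j, i, hcij.symm, h⟩
    simp only [c, Fin.mk_lt_mk] at hcij hij
    have hwlen : w.length = n + 1 := by simp [w, hn]
    rcases i with _ | i
    · obtain ⟨j, rfl⟩ := Nat.exists_eq_add_of_lt hij
      refine ih j (by omega) (u.take j) (by simp; omega) ?_
      simpa [w, deltaStar] using hcij.symm
    · refine ih (i + (w.length - j)) (by omega) (u.take i ++ w.drop j)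
        (by simp only [List.length_append, List.length_take, List.length_drop]; omega) ?_
      change deltaStar δ p (w.take (i + 1) ++ w.drop j) = p
      rw [deltaStar_append, hcij, ← deltaStar_append, List.take_append_drop, hclosed]

def reachSet (q : Q) : Set Q :=
  {p | ∃ w : List A, deltaStar δ q w = p}

noncomputable def reachCard (q : Q) : ℕ :=
  (reachSet δ q).ncard

lemma mem_reachSet_self (q : Q) : q ∈ reachSet δ q :=
  ⟨[], rfl⟩

lemma reachSet_step_subset (q : Q) (a : A) : reachSet δ (δ q a) ⊆ reachSet δ q :=
  fun _ ⟨w, hw⟩ => ⟨a :: w, hw⟩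

lemma WeaklyAcyclic.notMem_reachSet_step (hwa : WeaklyAcyclic δ) {q : Q} {a : A}
    (ha : δ q a ≠ q) : q ∉ reachSet δ (δ q a) :=
  fun ⟨u, hu⟩ => hwa.deltaStar_cons_ne_self δ ha u hu

lemma exists_deltaStar_eq_length_add_le (φ : Q → ℕ)
    (hφ : ∀ q a, δ q a ≠ q → φ (δ q a) < φ q) (q : Q) (w : List A) :
    ∃ w' : List A, deltaStar δ q w' = deltaStar δ q w ∧
      w'.length + φ (deltaStar δ q w) ≤ φ q := by
  induction w generalizing q with
  | nil => exact ⟨[], rfl, by simp [deltaStar]⟩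
  | cons a w ih =>
    obtain ⟨w', hw', hlen⟩ := ih (δ q a)
    rw [deltaStar_cons]
    by_cases hfix : δ q a = q
    · rw [hfix] at hw' hlen ⊢
      exact ⟨w', hw', hlen⟩
    · refine ⟨a :: w', hw', ?_⟩
      have hdrop := hφ q a hfix
      rw [List.length_cons]
      omega

variable [Finite Q]

lemma one_le_reachCard (q : Q) : 1 ≤ reachCard δ q :=
  (Set.ncard_pos).mpr ⟨q, mem_reachSet_self δ q⟩

lemma reachCard_le_natCard (q : Q) : reachCard δ q ≤ Nat.card Q :=
  Set.ncard_le_card _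

lemma WeaklyAcyclic.reachCard_step_lt (hwa : WeaklyAcyclic δ) {q : Q} {a : A}
    (ha : δ q a ≠ q) : reachCard δ (δ q a) < reachCard δ q :=
  Set.ncard_lt_ncard <| (reachSet_step_subset δ q a).ssubset_of_not_subset
    fun hsub => hwa.notMem_reachSet_step δ ha (hsub (mem_reachSet_self δ q))

lemma reachCard_step_le (q : Q) (a : A) : reachCard δ (δ q a) ≤ reachCard δ q :=
  Set.ncard_le_ncard (reachSet_step_subset δ q a)

end Automaton

section Product

variable {ι A : Type*} {Q : ι → Type*} (δ : ∀ i, Q i → A → Q i)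

def piTransition (q : ∀ i, Q i) (a : A) : ∀ i, Q i :=
  fun i => δ i (q i) a

lemma deltaStar_piTransition (q : ∀ i, Q i) (w : List A) (i : ι) :
    deltaStar (piTransition δ) q w i = deltaStar (δ i) (q i) w := by
  induction w generalizing q with
  | nil => rfl
  | cons a w ih => exact ih _

lemma exists_word_length_le_sum_reachCard [Fintype ι] [∀ i, Finite (Q i)]
    (hwa : ∀ i, WeaklyAcyclic (δ i)) (q : ∀ i, Q i) (w : List A) :
    ∃ w' : List A, (∀ i, deltaStar (δ i) (q i) w' = deltaStar (δ i) (q i) w) ∧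
      w'.length ≤ ∑ i, (reachCard (δ i) (q i) - 1) := by
  let φ : (∀ i, Q i) → ℕ := fun q => ∑ i, (reachCard (δ i) (q i) - 1)
  have hφ : ∀ q a, piTransition δ q a ≠ q → φ (piTransition δ q a) < φ q := by
    intro q a hmove
    obtain ⟨j, hj⟩ := Function.ne_iff.mp hmove
    refine Finset.sum_lt_sum (fun i _ => Nat.sub_le_sub_right (reachCard_step_le _ _ _) 1)
      ⟨j, Finset.mem_univ j, ?_⟩
    have hlt := (hwa j).reachCard_step_lt _ hj
    have hpos := one_le_reachCard (δ j) (δ j (q j) a)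
    simp only [piTransition]
    omega
  obtain ⟨w', hw', hlen⟩ := exists_deltaStar_eq_length_add_le _ φ hφ q w
  exact ⟨w', fun i => by simpa only [deltaStar_piTransition] using congrFun hw' i,
    (Nat.le_add_right _ _).trans hlen⟩

end Product

theorem stmt18_general {A : Type*} (k : ℕ) (Q : Fin k → Type*)
    [∀ i, Fintype (Q i)] (δ : ∀ i, Q i → A → Q i)
    (hwa : ∀ i, WeaklyAcyclic (δ i)) (q0 : ∀ i, Q i) (F : ∀ i, Set (Q i))
    (h : ∃ w : List A, ∀ i, deltaStar (δ i) (q0 i) w ∈ F i) :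
    ∃ w : List A, w.length ≤ ∑ i : Fin k, (Fintype.card (Q i) - 1) ∧
      ∀ i, deltaStar (δ i) (q0 i) w ∈ F i := by
  obtain ⟨w, hw⟩ := h
  obtain ⟨w', hend, hlen⟩ := exists_word_length_le_sum_reachCard δ hwa q0 w
  refine ⟨w', hlen.trans ?_, fun i => hend i ▸ hw i⟩
  exact Finset.sum_le_sum fun i _ =>
    Nat.sub_le_sub_right ((reachCard_le_natCard _ _).trans_eq Nat.card_eq_fintype_card) 1

/-- If weakly acyclic automata `A_1, …, A_k` over a common alphabet (with initial and
accepting states, `A_i` having `n_i` states) accept a common word, then they accept a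
common word of length at most `(n_1 - 1) + ⋯ + (n_k - 1)`. -/
theorem stmt18 {A : Type*} [Fintype A] (k : ℕ) (Q : Fin k → Type*)
    [∀ i, Fintype (Q i)] (δ : ∀ i, Q i → A → Q i)
    (hwa : ∀ i, WeaklyAcyclic (δ i)) (q0 : ∀ i, Q i) (F : ∀ i, Set (Q i))
    (h : ∃ w : List A, ∀ i, deltaStar (δ i) (q0 i) w ∈ F i) :
    ∃ w : List A, w.length ≤ ∑ i : Fin k, (Fintype.card (Q i) - 1) ∧
      ∀ i, deltaStar (δ i) (q0 i) w ∈ F i :=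
  stmt18_general k Q δ hwa q0 F h
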